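/- In a core input-output network G, if ρ is a super-simple node and κ is a node with ρ ⪯ σᵘ(κ), then every simple path from ι to κ passes through ρ. -/

import Mathlib

/-- A simple (directed) path from `a` to `b`: nonempty node list, consecutive arrows,
no repeated nodes. -/
def IsSPath {V : Type*} (E : V → V → Prop) (a b : V) (p : List V) : Prop :=
  p.Chain' E ∧ p.Nodup ∧ p.head? = some a ∧ p.getLast? = some b

/-- An `ιo`-simple path. -/
def IoSPath {V : Type*} (E : V → V → Prop) (ι o : V) (p : List V) : Prop :=
  IsSPath E ι o p

/-- A node is simple if it lies on some `ιo`-simple path. -/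
def SimpleNode {V : Type*} (E : V → V → Prop) (ι o v : V) : Prop :=
  ∃ p, IoSPath E ι o p ∧ v ∈ p

/-- A node is appendage if it is not simple. -/
def Appendage {V : Type*} (E : V → V → Prop) (ι o v : V) : Prop :=
  ¬ SimpleNode E ι o v

/-- A node is super-simple if it lies on every `ιo`-simple path. -/
def SuperSimple {V : Type*} (E : V → V → Prop) (ι o v : V) : Prop :=
  ∀ p, IoSPath E ι o p → v ∈ p

/-- A core network: every node is reachable from `ι` and reaches `o`. -/
def Core {V : Type*} (E : V → V → Prop) (ι o : V) : Prop :=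
  ∀ v, Relation.ReflTransGen E ι v ∧ Relation.ReflTransGen E v o

/-- `a` occurs (strictly) before `b` on some `ιo`-simple path. -/
def OccBefore {V : Type*} (E : V → V → Prop) (ι o a b : V) : Prop :=
  ∃ p, IoSPath E ι o p ∧ [a, b].Sublist p

/-- Strict partial order on simple nodes induced by super-simple nodes:
`a ≺ b` iff there is a super-simple node `ρ` with `a` (weakly) before `ρ`
and `ρ` (weakly) before `b` along `ιo`-simple paths, and `a ≠ b`. -/
def SLt {V : Type*} (E : V → V → Prop) (ι o a b : V) : Prop :=
  a ≠ b ∧ ∃ ρ, SuperSimple E ι o ρ ∧ (a = ρ ∨ OccBefore E ι o a ρ) ∧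
    (b = ρ ∨ OccBefore E ι o ρ b)

/-- Adjacent (consecutive) super-simple nodes. -/
def AdjSS {V : Type*} (E : V → V → Prop) (ι o ρ ρ' : V) : Prop :=
  SuperSimple E ι o ρ ∧ SuperSimple E ι o ρ' ∧ SLt E ι o ρ ρ' ∧
  ¬ ∃ ρ'', SuperSimple E ι o ρ'' ∧ SLt E ι o ρ ρ'' ∧ SLt E ι o ρ'' ρ'

/-- The simple subnetwork between adjacent super-simple nodes `ρ ≺ ρ'`. -/
def SimpleSubnet {V : Type*} (E : V → V → Prop) (ι o ρ ρ' : V) : Set V :=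
  {σ | SimpleNode E ι o σ ∧ SLt E ι o ρ σ ∧ SLt E ι o σ ρ'}

/-- Two simple nodes lie in the same simple subnetwork. -/
def SameSimpleSubnet {V : Type*} (E : V → V → Prop) (ι o a b : V) : Prop :=
  ∃ ρ ρ', AdjSS E ι o ρ ρ' ∧ a ∈ SimpleSubnet E ι o ρ ρ' ∧
    b ∈ SimpleSubnet E ι o ρ ρ'

/-- `a ⪯ b`: either `a ≺ b`, or `a = b` is super-simple, or `a`, `b` lie in
the same simple subnetwork. -/
def SLe {V : Type*} (E : V → V → Prop) (ι o a b : V) : Prop :=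
  SLt E ι o a b ∨ (a = b ∧ SuperSimple E ι o a) ∨ SameSimpleSubnet E ι o a b

/-- An appendage path from `a` to `b`: a simple path containing an appendage
node, all of whose nodes other than the endpoints are appendage. -/
def AppPath {V : Type*} (E : V → V → Prop) (ι o a b : V) (p : List V) : Prop :=
  IsSPath E a b p ∧ (∃ x ∈ p, Appendage E ι o x) ∧
  ∀ x ∈ p, x ≠ a → x ≠ b → Appendage E ι o x

/-- Reachability inside a set of nodes. -/
def ReachIn {V : Type*} (E : V → V → Prop) (s : Set V) (a b : V) : Prop :=
  Relation.ReflTransGen (fun x y => E x y ∧ x ∈ s ∧ y ∈ s) a b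

/-- `a` and `b` belong to the same transitive (strongly connected) component
of the subnetwork induced on `s`. -/
def SameTCIn {V : Type*} (E : V → V → Prop) (s : Set V) (a b : V) : Prop :=
  a ∈ s ∧ b ∈ s ∧ ReachIn E s a b ∧ ReachIn E s b a

/-- A super-appendage node: an appendage node whose transitive component in
every complementary subnetwork `C_S` consists only of appendage nodes. -/
def SuperAppendage {V : Type*} (E : V → V → Prop) (ι o τ : V) : Prop :=
  Appendage E ι o τ ∧ ∀ p, IoSPath E ι o p → τ ∉ p →
    ∀ x, SameTCIn E {v | v ∉ p} τ x → Appendage E ι o x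

/-- An appendage subnetwork: a transitive component of the subnetwork of
super-appendage nodes. -/
def IsAppSubnet {V : Type*} (E : V → V → Prop) (ι o : V) (A : Set V) : Prop :=
  ∃ τ, SuperAppendage E ι o τ ∧
    A = {x | SameTCIn E {v | SuperAppendage E ι o v} τ x}

/-- There is an appendage path from `σ` to `κ`. -/
def HasAppPathTo {V : Type*} (E : V → V → Prop) (ι o σ κ : V) : Prop :=
  ∃ p, AppPath E ι o σ κ p

/-- `σ = σᵘ(κ)`: if `κ` is simple then `σ = κ`; otherwise `σ` is a minimal
upstream simple node with an appendage path to `κ`. -/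
def IsSigmaU {V : Type*} (E : V → V → Prop) (ι o κ σ : V) : Prop :=
  (SimpleNode E ι o κ ∧ σ = κ) ∨
  (Appendage E ι o κ ∧ SimpleNode E ι o σ ∧ HasAppPathTo E ι o σ κ ∧
    ∀ σ', SimpleNode E ι o σ' → HasAppPathTo E ι o σ' κ → ¬ SLt E ι o σ' σ)

/-- There is an appendage path from some node of `A` to `σ`. -/
def HasAppPathFromSet {V : Type*} (E : V → V → Prop) (ι o : V) (A : Set V)
    (σ : V) : Prop :=
  ∃ τ ∈ A, ∃ p, AppPath E ι o τ σ p

/-- `σ = σᵈ(A)`: a maximal downstream simple node with an appendage path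
from `A`. -/
def IsSigmaD {V : Type*} (E : V → V → Prop) (ι o : V) (A : Set V) (σ : V) : Prop :=
  SimpleNode E ι o σ ∧ HasAppPathFromSet E ι o A σ ∧
    ∀ σ', SimpleNode E ι o σ' → HasAppPathFromSet E ι o A σ' → ¬ SLt E ι o σ σ'

/-- A simple (directed) cycle, given by its list of distinct nodes with a
closing arrow from the last node back to the first. -/
def IsSimpleCycle {V : Type*} (E : V → V → Prop) (c : List V) : Prop :=
  c.Chain' E ∧ c.Nodup ∧ ∃ a b, c.head? = some a ∧ c.getLast? = some b ∧ E b a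

/-- `τ` is a linked appendage node of the simple subnetwork determined by the
adjacent super-simple pair `ρ ≺ ρ'`. -/
def Linked {V : Type*} (E : V → V → Prop) (ι o ρ ρ' τ : V) : Prop :=
  Appendage E ι o τ ∧ ¬ SuperAppendage E ι o τ ∧
  ∃ p, IoSPath E ι o p ∧ τ ∉ p ∧ ∀ x, SameTCIn E {v | v ∉ p} τ x →
    x = τ ∨ x ∈ SimpleSubnet E ι o ρ ρ' ∨
      (Appendage E ι o x ∧ ¬ SuperAppendage E ι o x)

/-- The structural subnetwork determined by adjacent super-simple nodes
`ρ ≺ ρ'`: the two super-simple nodes, the simple subnetwork between them,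
and its linked appendage nodes. -/
def StructuralSet {V : Type*} (E : V → V → Prop) (ι o ρ ρ' : V) : Set V :=
  {ρ, ρ'} ∪ SimpleSubnet E ι o ρ ρ' ∪ {τ | Linked E ι o ρ ρ' τ}

/-- `L` is a structural subnetwork. -/
def IsStructSubnet {V : Type*} (E : V → V → Prop) (ι o : V) (L : Set V) : Prop :=
  ∃ ρ ρ', AdjSS E ι o ρ ρ' ∧ L = StructuralSet E ι o ρ ρ'

/-!
A super-simple node `z` separates `ι` from `o`: a walk from `ι` to `o` avoiding `z` would
contain an `ιo`-simple path avoiding `z`. Splicing a simple path from `ι` to `m` with the tail,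
from `m` on, of an `ιo`-simple path on which `z` precedes `m` shows that every simple path from
`ι` to `m` meets `z`. This settles the case of a simple `κ = σᵘ(κ)`, as `ρ ⪯ σᵘ(κ)` means that
`ρ = σᵘ(κ)` or `ρ` precedes `σᵘ(κ)`. For an appendage `κ`, cut a simple path from `ι` to `κ`
at its last simple node `σ`; the rest is an appendage path from `σ` to `κ`. If `ρ` is not met
before `σ`, then `ρ` lies after `σ` on an `ιo`-simple path through `σ`, so `σ ≺ σᵘ(κ)`,
against the minimality of `σᵘ(κ)`.
-/

namespace List

variable {α : Type*}

theorem pair_sublist_iff {x y : α} {l : List α} :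
    [x, y].Sublist l ↔ ∃ l₁ l₂, l = l₁ ++ x :: l₂ ∧ y ∈ l₂ := by
  constructor
  · intro h
    obtain ⟨r₁, r₂, rfl, hx, hy⟩ := List.cons_sublist_iff.mp h
    obtain ⟨s, t, rfl⟩ := List.append_of_mem hx
    exact ⟨s, t ++ r₂, by simp, by simpa using Or.inr hy⟩
  · rintro ⟨l₁, l₂, rfl, hy⟩
    exact (List.nil_sublist l₁).append ((List.singleton_sublist.mpr hy).cons_cons x)

theorem exists_eq_append_cons_forall_not_of_exists (P : α → Prop) :
    ∀ {l : List α}, (∃ x ∈ l, P x) →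
      ∃ l₁ x l₂, l = l₁ ++ x :: l₂ ∧ P x ∧ ∀ y ∈ l₂, ¬ P y
  | [], ⟨_, hx, _⟩ => absurd hx List.not_mem_nil
  | a :: t, h => by
    by_cases ht : ∃ x ∈ t, P x
    · obtain ⟨l₁, x, l₂, rfl, hx, hl₂⟩ := exists_eq_append_cons_forall_not_of_exists P ht
      exact ⟨a :: l₁, x, l₂, rfl, hx, hl₂⟩
    · push Not at ht
      obtain ⟨x, hx, hPx⟩ := h
      rcases List.mem_cons.mp hx with rfl | hxt
      · exact ⟨[], x, t, rfl, hPx, ht⟩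
      · exact absurd hPx (ht x hxt)

end List

namespace IsSPath

variable {V : Type*} {E : V → V → Prop} {a b c x : V} {p l₁ l₂ : List V}

theorem singleton (a : V) : IsSPath E a a [a] :=
  ⟨List.isChain_singleton a, List.nodup_singleton a, rfl, rfl⟩

theorem head_mem (h : IsSPath E a b p) : a ∈ p :=
  List.mem_of_mem_head? h.2.2.1

theorem getLast_mem (h : IsSPath E a b p) : b ∈ p :=
  List.mem_of_mem_getLast? h.2.2.2

theorem concat (h : IsSPath E a b p) (hbc : E b c) (hc : c ∉ p) :
    IsSPath E a c (p ++ [c]) := by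
  obtain ⟨hch, hnd, hh, hl⟩ := h
  refine ⟨hch.append (List.isChain_singleton c) ?_, ?_, ?_, List.getLast?_concat⟩
  · simp [hl, hbc]
  · exact hnd.append (List.nodup_singleton c) (by simpa using hc)
  · simp [List.head?_append, hh]

theorem takeUntil (h : IsSPath E a b (l₁ ++ x :: l₂)) : IsSPath E a x (l₁ ++ [x]) := by
  obtain ⟨hch, hnd, hh, -⟩ := h
  have hpre : (l₁ ++ [x]).IsPrefix (l₁ ++ x :: l₂) := ⟨l₂, by simp⟩
  refine ⟨hch.prefix hpre, hpre.sublist.nodup hnd, ?_, List.getLast?_concat⟩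
  simpa [List.head?_append] using hh

theorem dropUntil (h : IsSPath E a b (l₁ ++ x :: l₂)) : IsSPath E x b (x :: l₂) := by
  obtain ⟨hch, hnd, -, hl⟩ := h
  have hsuf : (x :: l₂).IsSuffix (l₁ ++ x :: l₂) := ⟨l₁, rfl⟩
  refine ⟨hch.suffix hsuf, hsuf.sublist.nodup hnd, rfl, ?_⟩
  simpa [List.getLast?_append] using hl

theorem reachIn {s : Set V} (h : IsSPath E a b p) (hs : ∀ y ∈ p, y ∈ s) :
    ReachIn E s a b := by
  obtain ⟨hch, -, hh, hl⟩ := h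
  have hne : p ≠ [] := by rintro rfl; simp at hh
  have := List.relationReflTransGen_of_exists_isChain p
    (hch.imp_of_mem_imp (S := fun y z => E y z ∧ y ∈ s ∧ z ∈ s)
      fun y z hy hz hyz => ⟨hyz, hs y hy, hs z hz⟩) hne
  rwa [(List.head_eq_iff_head?_eq_some hne).mpr hh,
    (List.getLast_eq_iff_getLast?_eq_some hne).mpr hl] at this

end IsSPath

theorem ReachIn.exists_isSPath {V : Type*} {E : V → V → Prop} {s : Set V} {a b : V}
    (h : ReachIn E s a b) (ha : a ∈ s) : ∃ p, IsSPath E a b p ∧ ∀ x ∈ p, x ∈ s := by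
  induction h with
  | refl => exact ⟨[a], IsSPath.singleton a, by simpa using ha⟩
  | @tail c d _ hcd ih =>
    obtain ⟨q, hq, hqs⟩ := ih
    obtain ⟨hcd, -, hd⟩ := hcd
    by_cases hdq : d ∈ q
    · obtain ⟨l₁, l₂, rfl⟩ := List.append_of_mem hdq
      refine ⟨l₁ ++ [d], hq.takeUntil, fun x hx => ?_⟩
      exact hqs x (List.IsPrefix.subset ⟨l₂, by simp⟩ hx)
    · refine ⟨q ++ [d], hq.concat hcd hdq, fun x hx => ?_⟩
      rcases List.mem_append.mp hx with hx | hx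
      · exact hqs x hx
      · rwa [List.mem_singleton.mp hx]

section Network

variable {V : Type*} {E : V → V → Prop} {ι o : V}

theorem SimpleNode.simpleNode_input {v : V} (h : SimpleNode E ι o v) : SimpleNode E ι o ι :=
  let ⟨_, hp, _⟩ := h
  ⟨_, hp, hp.head_mem⟩

theorem OccBefore.ne {a b : V} (h : OccBefore E ι o a b) : a ≠ b := by
  obtain ⟨_, hp, hsub⟩ := h
  simpa using hsub.nodup hp.2.1

theorem IsSPath.exists_appPath_of_appendage {a κ : V} {p : List V} (hp : IsSPath E a κ p)
    (ha : SimpleNode E ι o a) (hκ : Appendage E ι o κ) :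
    ∃ l₁ σ l₂, p = l₁ ++ σ :: l₂ ∧ SimpleNode E ι o σ ∧ AppPath E ι o σ κ (σ :: l₂) := by
  obtain ⟨l₁, σ, l₂, rfl, hσ, hl₂⟩ :=
    List.exists_eq_append_cons_forall_not_of_exists (SimpleNode E ι o) ⟨a, hp.head_mem, ha⟩
  refine ⟨l₁, σ, l₂, rfl, hσ, hp.dropUntil, ⟨κ, hp.dropUntil.getLast_mem, hκ⟩, ?_⟩
  exact fun x hx hxσ _ => hl₂ x ((List.mem_cons.mp hx).resolve_left hxσ)

namespace SuperSimple

variable {z m : V}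

theorem mem_or_mem (hz : SuperSimple E ι o z) {p₁ p₂ : List V}
    (h₁ : IsSPath E ι m p₁) (h₂ : IsSPath E m o p₂) : z ∈ p₁ ∨ z ∈ p₂ := by
  by_contra! hz₁₂
  have hreach : ReachIn E {x | x ≠ z} ι o :=
    Relation.ReflTransGen.trans (h₁.reachIn fun x hx hxz => hz₁₂.1 (hxz ▸ hx))
      (h₂.reachIn fun x hx hxz => hz₁₂.2 (hxz ▸ hx))
  obtain ⟨q, hq, hqz⟩ := hreach.exists_isSPath fun h => hz₁₂.1 (h ▸ h₁.head_mem)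
  exact hqz z (hz q hq) rfl

theorem mem_of_occBefore (hz : SuperSimple E ι o z) (hzm : OccBefore E ι o z m)
    {p : List V} (hp : IsSPath E ι m p) : z ∈ p := by
  obtain ⟨r, hr, hsub⟩ := hzm
  obtain ⟨l₁, l₂, rfl, hm⟩ := List.pair_sublist_iff.mp hsub
  obtain ⟨l₃, l₄, rfl⟩ := List.append_of_mem hm
  have hr' : IsSPath E ι o ((l₁ ++ z :: l₃) ++ m :: l₄) := by simpa [IoSPath] using hr
  refine (hz.mem_or_mem hp hr'.dropUntil).resolve_right fun hz' => ?_
  exact List.disjoint_of_nodup_append hr'.2.1 (by simp) hz'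

theorem not_occBefore (hz : SuperSimple E ι o z) (hzm : OccBefore E ι o z m) :
    ¬ OccBefore E ι o m z := by
  rintro ⟨s, hs, hsub⟩
  obtain ⟨l₁, l₂, rfl, hz'⟩ := List.pair_sublist_iff.mp hsub
  have hs' : IsSPath E ι o ((l₁ ++ [m]) ++ l₂) := by simpa [IoSPath] using hs
  exact List.disjoint_of_nodup_append hs'.2.1 (hz.mem_of_occBefore hzm hs.takeUntil) hz'

theorem occBefore_trans {z' : V} (hz : SuperSimple E ι o z) (h₁ : OccBefore E ι o z z')
    (h₂ : OccBefore E ι o z' m) : OccBefore E ι o z m := by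
  obtain ⟨s, hs, hsub⟩ := h₂
  obtain ⟨l₁, l₂, rfl, hm⟩ := List.pair_sublist_iff.mp hsub
  have hzl₁ : z ∈ l₁ := by
    simpa [h₁.ne] using hz.mem_of_occBefore h₁ hs.takeUntil
  exact ⟨_, hs, (List.singleton_sublist.mpr hzl₁).append
    (List.singleton_sublist.mpr (List.mem_cons_of_mem z' hm))⟩

theorem sLt_of_occBefore {a σ : V} (hz : SuperSimple E ι o z) (ha : OccBefore E ι o a z)
    (hσ : z = σ ∨ OccBefore E ι o z σ) : SLt E ι o a σ := by
  refine ⟨?_, z, hz, Or.inr ha, hσ.imp Eq.symm id⟩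
  rintro rfl
  rcases hσ with rfl | hσ
  · exact ha.ne rfl
  · exact hz.not_occBefore hσ ha

end SuperSimple

theorem SLe.eq_or_occBefore {ρ σ : V} (h : SLe E ι o ρ σ) (hρ : SuperSimple E ι o ρ) :
    ρ = σ ∨ OccBefore E ι o ρ σ := by
  rcases h with ⟨-, ρ', -, h₁, h₂⟩ | ⟨rfl, -⟩ | ⟨ρ₀, ρ₁, hadj, ⟨-, h₀, h₁⟩, -⟩
  · rcases h₁ with rfl | h₁ <;> rcases h₂ with rfl | h₂
    · exact Or.inl rfl
    · exact Or.inr h₂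
    · exact Or.inr h₁
    · exact Or.inr (hρ.occBefore_trans h₁ h₂)
  · exact Or.inl rfl
  · exact absurd ⟨ρ, hρ, h₀, h₁⟩ hadj.2.2.2

end Network

theorem every_path_through_general {V : Type*} (E : V → V → Prop) (ι o : V)
    (ρ κ σu : V)
    (hρ : SuperSimple E ι o ρ) (hu : IsSigmaU E ι o κ σu)
    (hle : SLe E ι o ρ σu) :
    ∀ p, IsSPath E ι κ p → ρ ∈ p := by
  intro p hp
  have hρσu := hle.eq_or_occBefore hρ
  rcases hu with ⟨-, rfl⟩ | ⟨hκ, hσu, -, hmin⟩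
  · rcases hρσu with rfl | hocc
    · exact hp.getLast_mem
    · exact hρ.mem_of_occBefore hocc hp
  obtain ⟨l₁, σ, l₂, rfl, hσ, happ⟩ := hp.exists_appPath_of_appendage hσu.simpleNode_input hκ
  have hσσu : ¬ SLt E ι o σ σu := hmin σ hσ ⟨_, happ⟩
  obtain ⟨q, hq, hσq⟩ := hσ
  obtain ⟨m₁, m₂, rfl⟩ := List.append_of_mem hσq
  rcases hρ.mem_or_mem hp.takeUntil hq.dropUntil with hρp | hρq
  · exact List.IsPrefix.subset ⟨l₂, by simp⟩ hρp
  rcases List.mem_cons.mp hρq with rfl | hρm₂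
  · simp
  · exact absurd (hρ.sLt_of_occBefore ⟨_, hq, List.pair_sublist_iff.mpr ⟨m₁, m₂, rfl, hρm₂⟩⟩
      hρσu) hσσu

/-- If `ρ` is super-simple and `ρ ⪯ σᵘ(κ)`, then every simple path from `ι`
to `κ` passes through `ρ`. -/
theorem every_path_through {V : Type*} (E : V → V → Prop) (ι o : V)
    (hcore : Core E ι o) (ρ κ σu : V)
    (hρ : SuperSimple E ι o ρ) (hu : IsSigmaU E ι o κ σu)
    (hle : SLe E ι o ρ σu) :
    ∀ p, IsSPath E ι κ p → ρ ∈ p :=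
  every_path_through_general E ι o ρ κ σu hρ hu hle
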